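/- arXiv:math/0309380 — 2 statements merged into one kernel-verified Lean document; each statement's English description precedes it below -/
import Mathlib

section
/- For every graph G with at least one edge and every k ≥ 1, the interleaved k-chromatic number of G equals the minimum over all layered acyclic orientations φ of the lexicographic product G^k of the number of nodes on a longest directed path under φ. -/
open SimpleGraph

open scoped Classical

noncomputable section

/-- An orientation of an undirected graph `G`: each edge receives exactly one
direction. -/
structure GraphOrientation {V : Type*} (G : SimpleGraph V) where
  dir : V → V → Prop
  dir_iff : ∀ u v, G.Adj u v ↔ (dir u v ∨ dir v u)
  not_both : ∀ u v, dir u v → ¬ dir v u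

/-- An orientation is acyclic if it produces no directed cycle. -/
def GraphOrientation.Acyclic {V : Type*} {G : SimpleGraph V}
    (ω : GraphOrientation G) : Prop :=
  ∀ v, ¬ Relation.TransGen ω.dir v v

/-- The number of nodes on a longest directed path of the relation `dir`. -/
def dirPathLen {V : Type*} (dir : V → V → Prop) : ℕ :=
  sSup {n | ∃ l : List V, l.Chain' dir ∧ l.length = n}

/-- The lexicographic product `G^k` of `G` with the complete graph on `k`
nodes: nodes `i^1, …, i^k` for each node `i` of `G`; all pairs `i^a, i^b`
(`a ≠ b`) are adjacent, and `i^a` is adjacent to `j^b` whenever `(i,j)` is an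
edge of `G`. -/
def lexProd {V : Type*} (G : SimpleGraph V) (k : ℕ) : SimpleGraph (V × Fin k) where
  Adj x y := G.Adj x.1 y.1 ∨ (x.1 = y.1 ∧ x.2 ≠ y.2)
  symm := ⟨fun x y h => by
    rcases h with h | ⟨h1, h2⟩
    · exact Or.inl h.symm
    · exact Or.inr ⟨h1.symm, h2.symm⟩⟩
  loopless := ⟨fun x h => by
    rcases h with h | ⟨h1, h2⟩
    · exact G.loopless.irrefl _ h
    · exact h2 rfl⟩

/-- A layered orientation of `G^k`: every edge between distinct layers points
from the higher layer to the lower one, and for each edge of `G` the `k`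
within-layer copies receive the same orientation. -/
def IsLayered {V : Type*} {G : SimpleGraph V} {k : ℕ}
    (φ : GraphOrientation (lexProd G k)) : Prop :=
  (∀ x y : V × Fin k, (lexProd G k).Adj x y → y.2 < x.2 → φ.dir x y) ∧
  (∀ i j : V, ∀ a b : Fin k, φ.dir (i, a) (j, a) → φ.dir (i, b) (j, b))

/-- A `k`-tuple coloring of `G`, recorded as the increasing list
`c v 0 < c v 1 < ⋯` of the `k` distinct colors of each node `v`; adjacent
nodes share no color. -/
def IsKTupleColoring {V : Type*} (G : SimpleGraph V) (k : ℕ)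
    (c : V → Fin k → ℕ) : Prop :=
  (∀ v, StrictMono (c v)) ∧ ∀ u v, G.Adj u v → ∀ a b, c u a ≠ c v b

/-- The colors of `u` and `v` strictly alternate, starting with `u`:
`c u 0 < c v 0 < c u 1 < c v 1 < ⋯ < c u (k-1) < c v (k-1)`. -/
def Alt {V : Type*} (k : ℕ) (c : V → Fin k → ℕ) (u v : V) : Prop :=
  (∀ a : Fin k, c u a < c v a) ∧
  ∀ (a : Fin k) (h : (a : ℕ) + 1 < k), c v a < c u ⟨(a : ℕ) + 1, h⟩

/-- An interleaved `k`-tuple coloring: on every edge the two `k`-tuples of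
colors strictly alternate. -/
def IsInterleavedColoring {V : Type*} (G : SimpleGraph V) (k : ℕ)
    (c : V → Fin k → ℕ) : Prop :=
  IsKTupleColoring G k c ∧ ∀ u v, G.Adj u v → Alt k c u v ∨ Alt k c v u

/-- The `k`-chromatic number `χ^k(G)`: the least number of colors in a
`k`-tuple coloring of `G`. -/
def chiK {V : Type*} (G : SimpleGraph V) (k : ℕ) : ℕ :=
  sInf {n | ∃ c : V → Fin k → ℕ, IsKTupleColoring G k c ∧ ∀ v a, c v a < n}

/-- The interleaved `k`-chromatic number `χ_int^k(G)`. -/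
def chiIntK {V : Type*} (G : SimpleGraph V) (k : ℕ) : ℕ :=
  sInf {n | ∃ c : V → Fin k → ℕ, IsInterleavedColoring G k c ∧ ∀ v a, c v a < n}

/-- The chromatic number of `G`: the least number of colors in a proper
(1-tuple) coloring. -/
def chromNat {V : Type*} (G : SimpleGraph V) : ℕ :=
  sInf {n | ∃ c : V → ℕ, (∀ u v, G.Adj u v → c u ≠ c v) ∧ ∀ v, c v < n}

/-- The multichromatic number `χ^*(G) = inf_{k ≥ 1} χ^k(G)/k`. -/
def chiStar {V : Type*} (G : SimpleGraph V) : ℝ :=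
  ⨅ k : ℕ+, (chiK G k : ℝ) / ((k : ℕ) : ℝ)

/-- The interleaved multichromatic number
`χ_int^*(G) = inf_{k ≥ 1} χ_int^k(G)/k`. -/
def chiIntStar {V : Type*} (G : SimpleGraph V) : ℝ :=
  ⨅ k : ℕ+, (chiIntK G k : ℝ) / ((k : ℕ) : ℝ)

/-- `m(κ⁺, ω)`: the number of edges of the closed walk `κ` oriented by `ω` in
the traversal direction of `κ`. -/
def mFwd {V : Type*} {G : SimpleGraph V} {v : V} (ω : GraphOrientation G)
    (κ : G.Walk v v) : ℕ :=
  (κ.darts.filter (fun d => decide (ω.dir d.toProd.1 d.toProd.2))).length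

/-- `m(κ⁻, ω)`: the number of edges of the closed walk `κ` oriented by `ω`
against the traversal direction of `κ`. -/
def mBwd {V : Type*} {G : SimpleGraph V} {v : V} (ω : GraphOrientation G)
    (κ : G.Walk v v) : ℕ :=
  (κ.darts.filter (fun d => decide (ω.dir d.toProd.2 d.toProd.1))).length

end

/-
Flatten an interleaved colouring `c` to the colouring `(v, a) ↦ c v a` of `G^k` and orient every
edge towards its endpoint of smaller colour. This orientation is acyclic, colours strictly decrease
along directed paths, so no path has more nodes than there are colours, and the alternation of the
colour tuples on the edges of `G` is exactly what makes the orientation layered. Conversely, given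
a layered acyclic orientation, colour each node of `G^k` by the number of nodes following it on a
longest directed path from it: colours strictly decrease along arcs and stay below the length of a
longest path, and layeredness makes the colour tuples interleave.
-/

open Relation

section ChainHeight

variable {α : Type*} {r : α → α → Prop}

lemma List.IsChain.nodup_of_acyclic (hr : ∀ v, ¬ TransGen r v v) {l : List α}
    (hl : l.IsChain r) : l.Nodup := by
  have : IsTrans α (TransGen r) := ⟨fun _ _ _ => TransGen.trans⟩
  have hp : l.Pairwise (TransGen r) :=
    List.isChain_iff_pairwise.mp (hl.imp fun _ _ => TransGen.single)
  exact hp.imp fun {a b} (h : TransGen r a b) (hab : a = b) => hr a (hab ▸ h)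

lemma List.IsChain.length_le_card_of_acyclic [Fintype α] (hr : ∀ v, ¬ TransGen r v v)
    {l : List α} (hl : l.IsChain r) : l.length ≤ Fintype.card α :=
  (hl.nodup_of_acyclic hr).length_le_card

lemma length_le_of_isChain_cons {f : α → ℕ} (hf : ∀ x y, r x y → f y < f x) :
    ∀ {x : α} {l : List α}, (x :: l).IsChain r → l.length ≤ f x
  | _, [], _ => Nat.zero_le _
  | x, y :: _, h =>
    Nat.succ_le_of_lt ((length_le_of_isChain_cons hf h.tail).trans_lt (hf x y h.rel))

lemma dirPathLen_le_of_strictAnti {f : α → ℕ} {n : ℕ} (hfn : ∀ x, f x < n)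
    (hf : ∀ x y, r x y → f y < f x) : dirPathLen r ≤ n := by
  refine csSup_le ⟨0, [], List.IsChain.nil, rfl⟩ ?_
  rintro _ ⟨_ | ⟨x, l⟩, hl, rfl⟩
  · exact Nat.zero_le n
  · exact Nat.succ_le_of_lt ((length_le_of_isChain_cons hf hl).trans_lt (hfn x))

/-- The number of nodes *after* `x` on a longest `r`-chain starting at `x`. -/
noncomputable def chainHeight (r : α → α → Prop) (x : α) : ℕ :=
  sSup {n | ∃ l : List α, (x :: l).IsChain r ∧ l.length = n}

variable [Fintype α] (hr : ∀ v, ¬ TransGen r v v)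
include hr

lemma bddAbove_dirPathLen_set : BddAbove {n | ∃ l : List α, l.IsChain r ∧ l.length = n} :=
  ⟨Fintype.card α, by rintro _ ⟨l, hl, rfl⟩; exact hl.length_le_card_of_acyclic hr⟩

lemma bddAbove_chainHeight_set (x : α) :
    BddAbove {n | ∃ l : List α, (x :: l).IsChain r ∧ l.length = n} :=
  ⟨Fintype.card α, by
    rintro _ ⟨l, hl, rfl⟩
    exact Nat.le_of_succ_le (hl.length_le_card_of_acyclic hr)⟩

lemma exists_isChain_length_eq_chainHeight (x : α) :
    ∃ l : List α, (x :: l).IsChain r ∧ l.length = chainHeight r x := by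
  refine Nat.sSup_mem ?_ (bddAbove_chainHeight_set hr x)
  exact ⟨0, [], List.IsChain.singleton x, rfl⟩

lemma chainHeight_lt_of_rel {x y : α} (hxy : r x y) : chainHeight r y < chainHeight r x := by
  obtain ⟨l, hl, hlen⟩ := exists_isChain_length_eq_chainHeight hr y
  exact Nat.lt_of_succ_le
    (le_csSup (bddAbove_chainHeight_set hr x) ⟨y :: l, hl.cons_cons hxy, by simp [hlen]⟩)

lemma chainHeight_lt_dirPathLen (x : α) : chainHeight r x < dirPathLen r := by
  obtain ⟨l, hl, hlen⟩ := exists_isChain_length_eq_chainHeight hr x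
  exact Nat.lt_of_succ_le (le_csSup (bddAbove_dirPathLen_set hr) ⟨x :: l, hl, by simp [hlen]⟩)

end ChainHeight

section Orientations

variable {W : Type*} {H : SimpleGraph W}

def GraphOrientation.ofColoring (f : W → ℕ) (hf : ∀ x y, H.Adj x y → f x ≠ f y) :
    GraphOrientation H where
  dir x y := H.Adj x y ∧ f y < f x
  dir_iff x y := by
    refine ⟨fun h => ?_, ?_⟩
    · rcases (hf x y h).lt_or_gt with hlt | hlt
      · exact Or.inr ⟨h.symm, hlt⟩
      · exact Or.inl ⟨h, hlt⟩
    · rintro (⟨h, -⟩ | ⟨h, -⟩)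
      · exact h
      · exact h.symm
  not_both _ _ h h' := h.2.asymm h'.2

variable {f : W → ℕ} {hf : ∀ x y, H.Adj x y → f x ≠ f y}

lemma GraphOrientation.ofColoring_acyclic : (ofColoring f hf).Acyclic := fun v hv => by
  have hgt : TransGen (· > ·) (f v) (f v) := TransGen.lift f (fun _ _ h => h.2) v v hv
  rw [transGen_eq_self] at hgt
  exact lt_irrefl (f v) hgt

lemma GraphOrientation.dirPathLen_ofColoring_le {n : ℕ} (hfn : ∀ x, f x < n) :
    dirPathLen (ofColoring f hf).dir ≤ n :=
  dirPathLen_le_of_strictAnti hfn fun _ _ h => h.2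

end Orientations

section Interleaved

variable {V : Type*} {G : SimpleGraph V} {k : ℕ}

lemma IsKTupleColoring.ne_of_lexProd_adj {c : V → Fin k → ℕ} (hc : IsKTupleColoring G k c)
    {x y : V × Fin k} (h : (lexProd G k).Adj x y) : c x.1 x.2 ≠ c y.1 y.2 := by
  obtain ⟨i, a⟩ := x
  obtain ⟨j, b⟩ := y
  rcases h with h | ⟨rfl, hab⟩
  · exact hc.2 i j h a b
  · exact (hc.1 i).injective.ne hab

lemma IsInterleavedColoring.isLayered_ofColoring {c : V → Fin k → ℕ}
    (hc : IsInterleavedColoring G k c) :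
    IsLayered (GraphOrientation.ofColoring (fun x : V × Fin k => c x.1 x.2)
      fun _ _ => hc.1.ne_of_lexProd_adj) := by
  refine ⟨?_, ?_⟩
  · rintro ⟨i, a⟩ ⟨j, b⟩ hadj (hba : b < a)
    refine ⟨hadj, ?_⟩
    rcases hadj with h | ⟨rfl, -⟩
    · rcases hc.2 i j h with hij | hji
      · have hb : (b : ℕ) + 1 < k := by omega
        have hba' : (⟨b + 1, hb⟩ : Fin k) ≤ a := hba
        exact (hij.2 b hb).trans_le ((hc.1.1 i).monotone hba')
      · exact (hji.1 b).trans (hc.1.1 i hba)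
    · exact hc.1.1 i hba
  · rintro i j a b ⟨hadj, hlt⟩
    have hG : G.Adj i j := hadj.resolve_right fun h => h.2 rfl
    refine ⟨Or.inl hG, ?_⟩
    rcases hc.2 i j hG with hij | hji
    · exact absurd hlt (hij.1 a).asymm
    · exact hji.1 b

lemma IsInterleavedColoring.exists_layered_dirPathLen_le {c : V → Fin k → ℕ} {n : ℕ}
    (hc : IsInterleavedColoring G k c) (hn : ∀ v a, c v a < n) :
    ∃ φ : GraphOrientation (lexProd G k), φ.Acyclic ∧ IsLayered φ ∧ dirPathLen φ.dir ≤ n :=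
  ⟨_, GraphOrientation.ofColoring_acyclic, hc.isLayered_ofColoring,
    GraphOrientation.dirPathLen_ofColoring_le fun x => hn x.1 x.2⟩

variable {φ : GraphOrientation (lexProd G k)}

lemma IsLayered.forall_dir_or_forall_dir (hφ : IsLayered φ) {u v : V} (huv : G.Adj u v) :
    (∀ a, φ.dir (u, a) (v, a)) ∨ ∀ a, φ.dir (v, a) (u, a) := by
  by_cases h : ∃ a, φ.dir (u, a) (v, a)
  · obtain ⟨a, ha⟩ := h
    exact Or.inl fun b => hφ.2 u v a b ha
  · exact Or.inr fun a => ((φ.dir_iff _ _).mp (Or.inl huv)).resolve_left (not_exists.mp h a)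

variable [Fintype V]

lemma IsLayered.alt_chainHeight (hφ : IsLayered φ) (hac : φ.Acyclic) {u v : V}
    (huv : G.Adj u v) (hdir : ∀ a, φ.dir (u, a) (v, a)) :
    Alt k (fun w a => chainHeight φ.dir (w, a)) v u :=
  ⟨fun a => chainHeight_lt_of_rel hac (hdir a), fun a ha =>
    chainHeight_lt_of_rel hac (hφ.1 (v, ⟨a + 1, ha⟩) (u, a) (Or.inl huv.symm) (Nat.lt_succ_self _))⟩

lemma IsLayered.isInterleavedColoring_chainHeight (hφ : IsLayered φ) (hac : φ.Acyclic) :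
    IsInterleavedColoring G k (fun w a => chainHeight φ.dir (w, a)) := by
  refine ⟨⟨fun v a b hab => ?_, fun u v huv a b => ?_⟩, fun u v huv => ?_⟩
  · exact chainHeight_lt_of_rel hac (hφ.1 (v, b) (v, a) (Or.inr ⟨rfl, hab.ne'⟩) hab)
  · rcases (φ.dir_iff (u, a) (v, b)).mp (Or.inl huv) with h | h
    · exact (chainHeight_lt_of_rel hac h).ne'
    · exact (chainHeight_lt_of_rel hac h).ne
  · rcases hφ.forall_dir_or_forall_dir huv with h | h
    · exact Or.inr (hφ.alt_chainHeight hac huv h)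
    · exact Or.inl (hφ.alt_chainHeight hac huv.symm h)

end Interleaved

theorem stmt5_general {V : Type*} [Fintype V] (G : SimpleGraph V) (k : ℕ) :
    chiIntK G k =
      sInf {n | ∃ φ : GraphOrientation (lexProd G k),
        φ.Acyclic ∧ IsLayered φ ∧ n = dirPathLen φ.dir} := by
  refine csInf_eq_csInf_of_forall_exists_le ?_ ?_
  · rintro n ⟨c, hc, hn⟩
    obtain ⟨φ, hac, hφ, hle⟩ := hc.exists_layered_dirPathLen_le hn
    exact ⟨_, ⟨φ, hac, hφ, rfl⟩, hle⟩
  · rintro _ ⟨φ, hac, hφ, rfl⟩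
    exact ⟨_, ⟨_, hφ.isInterleavedColoring_chainHeight hac,
      fun v a => chainHeight_lt_dirPathLen hac (v, a)⟩, le_rfl⟩

/-- For every graph `G` with at least one edge and every `k ≥ 1`,
the interleaved `k`-chromatic number of `G` equals the minimum over all
layered acyclic orientations `φ` of the lexicographic product `G^k` of the
number of nodes on a longest directed path under `φ`. -/
theorem stmt5 {V : Type*} [Fintype V] (G : SimpleGraph V)
    (hE : G.edgeSet.Nonempty) (k : ℕ) (hk : 1 ≤ k) :
    chiIntK G k =
      sInf {n | ∃ φ : GraphOrientation (lexProd G k),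
        φ.Acyclic ∧ IsLayered φ ∧ n = dirPathLen φ.dir} :=
  stmt5_general G k
end

section
/- If p is a longest directed path of G^k under a layered acyclic orientation, then no edge of p joins two copies i^{k1} and i^{k1-1} of the same node i of G. -/
open SimpleGraph

open scoped Classical

/-!
Suppose a longest directed path `p` steps from `i^a` down to `i^(a-1)`. If `i` has a neighbour `j`
in `G`, the edge `i j` is oriented the same way in layers `a` and `a-1`, so either
`i^a → j^a → i^(a-1)` or `i^a → j^(a-1) → i^(a-1)` is a detour through the layering, and
inserting it lengthens `p`. If `i` is isolated, `p` never leaves the `k` copies of `i`, so by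
acyclicity it has at most `k` nodes; yet any edge `u v` of `G` gives the longer path
`u^k → v^k → v^(k-1) → ⋯ → v^1`.
-/

namespace List

variable {α : Type*}

theorem exists_eq_append_cons_cons_of_mem_zip_tail {x y : α} :
    ∀ {l : List α}, (x, y) ∈ l.zip l.tail → ∃ l₁ l₂, l = l₁ ++ x :: y :: l₂
  | [], h | [_], h => by simp at h
  | a :: b :: t, h => by
    rcases (by simpa using h : (x = a ∧ y = b) ∨ (x, y) ∈ (b :: t).zip t) with ⟨rfl, rfl⟩ | h
    · exact ⟨[], t, rfl⟩
    · obtain ⟨l₁, l₂, e⟩ := exists_eq_append_cons_cons_of_mem_zip_tail (l := b :: t) h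
      exact ⟨a :: l₁, l₂, by simp [e]⟩

theorem IsChain.insert_between {R : α → α → Prop} {l₁ l₂ : List α} {x y w : α}
    (h : (l₁ ++ x :: y :: l₂).IsChain R) (hxw : R x w) (hwy : R w y) :
    (l₁ ++ x :: w :: y :: l₂).IsChain R := by
  rw [isChain_append_cons_cons] at h ⊢
  exact ⟨h.1, hxw, isChain_cons_cons.2 ⟨hwy, h.2.2⟩⟩

theorem IsChain.eq_of_mem {β : Type*} {f : α → β} {l : List α}
    (h : l.IsChain fun x y => f x = f y) {x y : α} (hx : x ∈ l) (hy : y ∈ l) : f x = f y := by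
  cases l with
  | nil => cases hx
  | cons z _ =>
    have hrep := isChain_eq_iff_eq_replicate.1 ((isChain_map f).2 h) (f z) rfl
    have hall := (eq_replicate_iff.1 hrep).2
    exact (hall _ (mem_map_of_mem hx)).trans (hall _ (mem_map_of_mem hy)).symm

theorem IsChain.nodup_of_irrefl_transGen {R : α → α → Prop} {l : List α} (h : l.IsChain R)
    (hR : ∀ x, ¬ Relation.TransGen R x x) : l.Nodup := by
  have hpw : l.Pairwise (Relation.TransGen R) :=
    isChain_iff_pairwise.1 (h.imp fun _ _ => .single)
  refine hpw.imp ?_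
  rintro x _ hxy rfl
  exact hR x hxy

theorem Nodup.length_le_card_of_forall_fst_eq {β : Type*} [Fintype β] {l : List (α × β)}
    (hl : l.Nodup) {i : α} (hi : ∀ x ∈ l, x.1 = i) : l.length ≤ Fintype.card β := by
  have hsnd : (l.map Prod.snd).Nodup :=
    hl.map_on fun x hx y hy hxy => Prod.ext ((hi x hx).trans (hi y hy).symm) hxy
  simpa using hsnd.length_le_card

end List

namespace IsLayered

variable {V : Type*} {G : SimpleGraph V} {k : ℕ} {φ : GraphOrientation (lexProd G k)}

theorem exists_dir_dir_of_adj (hl : IsLayered φ) {i j : V} (hij : G.Adj i j) {a b : Fin k}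
    (hba : b < a) : ∃ w, φ.dir (i, a) w ∧ φ.dir w (i, b) := by
  rcases (φ.dir_iff (i, a) (j, a)).1 (Or.inl hij) with hij_a | hji_a
  · exact ⟨(j, a), hij_a, hl.1 (j, a) (i, b) (Or.inl hij.symm) hba⟩
  · exact ⟨(j, b), hl.1 (i, a) (j, b) (Or.inl hij) hba, hl.2 j i a b hji_a⟩

theorem isChain_map_finRange_reverse (hl : IsLayered φ) (v : V) :
    ((List.finRange k).reverse.map (v, ·)).IsChain φ.dir := by
  refine List.Pairwise.isChain ((List.pairwise_reverse.2 (List.pairwise_lt_finRange k)).map _ ?_)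
  intro c c' hcc
  exact hl.1 (v, c) (v, c') (Or.inr ⟨rfl, hcc.ne'⟩) hcc

theorem exists_isChain_length_eq (hl : IsLayered φ) (hE : G.edgeSet.Nonempty) (hk : 0 < k) :
    ∃ L : List (V × Fin k), L.IsChain φ.dir ∧ L.length = k + 1 := by
  let top : Fin k := ⟨k - 1, by omega⟩
  obtain ⟨u, v, huv, hdir⟩ : ∃ u v, G.Adj u v ∧ φ.dir (u, top) (v, top) := by
    obtain ⟨⟨u, v⟩, huv⟩ := hE
    rcases (φ.dir_iff (u, top) (v, top)).1 (Or.inl huv) with h | h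
    · exact ⟨u, v, huv, h⟩
    · exact ⟨v, u, huv.symm, h⟩
  have hdir_all : ∀ c : Fin k, φ.dir (u, top) (v, c) := by
    intro c
    rcases (show c ≤ top from Fin.le_def.2 (by simp only [top]; omega)).lt_or_eq with hc | rfl
    · exact hl.1 (u, top) (v, c) (Or.inl huv) hc
    · exact hdir
  refine ⟨(u, top) :: (List.finRange k).reverse.map (v, ·), ?_, by simp⟩
  refine List.isChain_cons.2 ⟨fun y hy => ?_, hl.isChain_map_finRange_reverse v⟩
  obtain ⟨c, -, rfl⟩ := List.mem_map.1 (List.mem_of_mem_head? hy)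
  exact hdir_all c

end IsLayered

namespace GraphOrientation

variable {V : Type*} {G : SimpleGraph V} {k : ℕ} {φ : GraphOrientation (lexProd G k)}

theorem fst_eq_of_isChain_of_isolated {i : V} (hi : ∀ j, ¬ G.Adj i j)
    {p : List (V × Fin k)} (hp : p.IsChain φ.dir) {a : Fin k} (ha : (i, a) ∈ p) :
    ∀ x ∈ p, x.1 = i := by
  have hstay : p.IsChain fun x y => (x.1 = i) = (y.1 = i) := by
    refine hp.imp fun x y hxy => ?_
    rcases (φ.dir_iff x y).2 (Or.inl hxy) with hG | ⟨h, -⟩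
    · refine propext ⟨fun hx => ?_, fun hy => ?_⟩
      · exact absurd (hx ▸ hG) (hi y.1)
      · exact absurd (hy ▸ hG.symm) (hi x.1)
    · rw [h]
  intro x hx
  simpa using hstay.eq_of_mem hx ha

theorem length_le_of_isChain_of_isolated (hac : φ.Acyclic) {i : V} (hi : ∀ j, ¬ G.Adj i j)
    {p : List (V × Fin k)} (hp : p.IsChain φ.dir) {a : Fin k} (ha : (i, a) ∈ p) :
    p.length ≤ k := by
  simpa using (hp.nodup_of_irrefl_transGen hac).length_le_card_of_forall_fst_eq
    (fst_eq_of_isChain_of_isolated hi hp ha)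

end GraphOrientation

theorem stmt9_general {V : Type*} (G : SimpleGraph V)
    (hE : G.edgeSet.Nonempty) (k : ℕ)
    (φ : GraphOrientation (lexProd G k)) (hl : IsLayered φ) (hac : φ.Acyclic)
    (p : List (V × Fin k)) (hchain : p.Chain' φ.dir)
    (hmax : ∀ q : List (V × Fin k), q.Chain' φ.dir → q.length ≤ p.length) :
    ∀ (i : V) (a b : Fin k), (a : ℕ) = (b : ℕ) + 1 →
      ((i, a), (i, b)) ∉ p.zip p.tail := by
  intro i a b hab hmem
  obtain ⟨l₁, l₂, rfl⟩ := List.exists_eq_append_cons_cons_of_mem_zip_tail hmem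
  by_cases hi : ∃ j, G.Adj i j
  · obtain ⟨j, hij⟩ := hi
    obtain ⟨w, hiw, hwi⟩ := hl.exists_dir_dir_of_adj hij (Fin.lt_def.2 (by omega) : b < a)
    have hlonger := hmax _ (List.IsChain.insert_between hchain hiw hwi)
    simp at hlonger
  · simp only [not_exists] at hi
    obtain ⟨L, hL, hLlen⟩ := hl.exists_isChain_length_eq hE a.pos
    have hpL := hmax L hL
    have hpk := φ.length_le_of_isChain_of_isolated hac hi hchain (a := a) (by simp)
    omega

/-- If `p` is a longest directed path of `G^k` under a layered
acyclic orientation, then no edge of `p` joins two copies `i^{k₁}` and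
`i^{k₁-1}` of the same node `i` of `G`. -/
theorem stmt9 {V : Type*} [Fintype V] (G : SimpleGraph V)
    (hE : G.edgeSet.Nonempty) (k : ℕ) (hk : 2 ≤ k)
    (φ : GraphOrientation (lexProd G k)) (hl : IsLayered φ) (hac : φ.Acyclic)
    (p : List (V × Fin k)) (hchain : p.Chain' φ.dir)
    (hmax : ∀ q : List (V × Fin k), q.Chain' φ.dir → q.length ≤ p.length) :
    ∀ (i : V) (a b : Fin k), (a : ℕ) = (b : ℕ) + 1 →
      ((i, a), (i, b)) ∉ p.zip p.tail :=
  stmt9_general G hE k φ hl hac p hchain hmax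
end
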